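/- arXiv:2403.08728 — 5 statements merged into one kernel-verified Lean document; each statement's English description precedes it below -/
import Mathlib

section
/- Under the stated setting, the cross term in the ambient-diffusion objective vanishes: for every function F : Ω → ℝⁿ that is 𝒢-measurable and square-integrable with respect to μ, one has ∫_Ω ⟪A(ω) · (G(ω) − X(ω)), A(ω) · F(ω)⟫ dμ(ω) = 0, where · denotes matrix–vector multiplication (mulVec) and ⟪·,·⟫ the Euclidean inner product on ℝⁿ. -/
open MeasureTheory
open scoped RealInnerProductSpace

section Aux

variable {Ω : Type*} {m ℱ : MeasurableSpace Ω} {μ : Measure Ω}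

lemma aux_memℒp_two_condexp [IsProbabilityMeasure μ] (hm : m ≤ ℱ) {f : Ω → ℝ}
    (hf : MemLp f 2 μ) : MemLp (μ[f|m]) 2 μ := by
  set g : Lp ℝ 2 μ := ↑(condExpL2 ℝ ℝ hm (hf.toLp f)) with hg
  have hae : (g : Ω → ℝ) =ᵐ[μ] μ[f|m] := by
    refine ae_eq_condExp_of_forall_setIntegral_eq hm (hf.integrable one_le_two)
      (fun s _ _ => ((Lp.memLp g).integrable one_le_two).integrableOn)
      (fun s hs hμs => ?_) (aestronglyMeasurable_condExpL2 hm _)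
    rw [hg, integral_condExpL2_eq hm (hf.toLp f) hs hμs.ne]
    exact setIntegral_congr_ae (hm s hs) ((hf.coeFn_toLp).mono fun x hx _ => hx)
  exact (Lp.memLp g).ae_eq hae

lemma aux_condexp_euclidean_apply [IsProbabilityMeasure μ] (hm : m ≤ ℱ) {n : ℕ}
    {X : Ω → EuclideanSpace ℝ (Fin n)} (hX : Integrable X μ) (j : Fin n) :
    (fun ω => (μ[X|m]) ω j) =ᵐ[μ] μ[fun ω => X ω j|m] := by
  refine ae_eq_condExp_of_forall_setIntegral_eq hm
    ((EuclideanSpace.proj j : EuclideanSpace ℝ (Fin n) →L[ℝ] ℝ).integrable_comp hX)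
    (fun s _ _ => ((EuclideanSpace.proj j :
        EuclideanSpace ℝ (Fin n) →L[ℝ] ℝ).integrable_comp
        (integrable_condExp : Integrable (μ[X|m]) μ)).integrableOn)
    (fun s hs hμs => ?_) ?_
  · have h1 := (EuclideanSpace.proj j : EuclideanSpace ℝ (Fin n) →L[ℝ] ℝ).integral_comp_comm
      ((integrable_condExp : Integrable (μ[X|m]) μ).restrict (s := s))
    have h2 := (EuclideanSpace.proj j : EuclideanSpace ℝ (Fin n) →L[ℝ] ℝ).integral_comp_comm
      (hX.restrict (s := s))
    simp only [PiLp.proj_apply] at h1 h2 ⊢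
    rw [h1, h2, setIntegral_condExp hm hX hs]
  · exact ((EuclideanSpace.proj j :
      EuclideanSpace ℝ (Fin n) →L[ℝ] ℝ).continuous.comp_stronglyMeasurable
      stronglyMeasurable_condExp).aestronglyMeasurable

lemma aux_integrable_mul_of_memℒp_two {f g : Ω → ℝ} (hf : MemLp f 2 μ) (hg : MemLp g 2 μ) :
    Integrable (fun ω => f ω * g ω) μ := by
  refine Integrable.mono' (hf.integrable_sq.add hg.integrable_sq) (hf.1.mul hg.1)
    (Filter.Eventually.of_forall fun ω => ?_)
  simp only [Pi.add_apply, Real.norm_eq_abs, abs_mul]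
  nlinarith [sq_nonneg (|f ω| - |g ω|), abs_nonneg (f ω), abs_nonneg (g ω),
    sq_abs (f ω), sq_abs (g ω)]

lemma aux_coord_norm_le {n : ℕ} (x : EuclideanSpace ℝ (Fin n)) (j : Fin n) :
    ‖x j‖ ≤ ‖x‖ := by
  rw [EuclideanSpace.norm_eq]
  calc ‖x j‖ = Real.sqrt (‖x j‖ ^ 2) := (Real.sqrt_sq (norm_nonneg _)).symm
    _ ≤ Real.sqrt (∑ i, ‖x i‖ ^ 2) := Real.sqrt_le_sqrt
        (Finset.single_le_sum (fun i _ => sq_nonneg ‖x i‖) (Finset.mem_univ j))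

lemma aux_memℒp_two_coord {n : ℕ} {X : Ω → EuclideanSpace ℝ (Fin n)}
    (hX2 : MemLp X 2 μ) (j : Fin n) : MemLp (fun ω => X ω j) 2 μ :=
  hX2.of_le ((EuclideanSpace.proj j :
      EuclideanSpace ℝ (Fin n) →L[ℝ] ℝ).continuous.comp_aestronglyMeasurable hX2.1)
    (Filter.Eventually.of_forall fun ω => aux_coord_norm_le (X ω) j)

lemma aux_sum_rearrange {n : ℕ} (a : Fin n → Fin n → ℝ) (d f : Fin n → ℝ) :
    ∑ i, (∑ j, a i j * d j) * (∑ k, a i k * f k)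
      = ∑ j, ∑ k, d j * (f k * ∑ i, a i j * a i k) := by
  calc ∑ i, (∑ j, a i j * d j) * (∑ k, a i k * f k)
      = ∑ i, ∑ j, ∑ k, d j * (f k * (a i j * a i k)) :=
        Finset.sum_congr rfl fun i _ => by
          rw [Finset.sum_mul_sum]
          exact Finset.sum_congr rfl fun j _ =>
            Finset.sum_congr rfl fun k _ => by ring
    _ = ∑ j, ∑ i, ∑ k, d j * (f k * (a i j * a i k)) := Finset.sum_comm
    _ = ∑ j, ∑ k, ∑ i, d j * (f k * (a i j * a i k)) :=
        Finset.sum_congr rfl fun j _ => Finset.sum_comm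
    _ = ∑ j, ∑ k, d j * (f k * ∑ i, a i j * a i k) :=
        Finset.sum_congr rfl fun j _ => Finset.sum_congr rfl fun k _ => by
          rw [← Finset.mul_sum, ← Finset.mul_sum]

end Aux

/-- **Vanishing cross term in the ambient-diffusion objective.**
Let `(Ω, ℱ, μ)` be a probability space, `𝒢 ≤ ℱ` a sub-σ-algebra, `X` a measurable
square-integrable `ℝⁿ`-valued signal, `A` a measurable matrix-valued map with uniformly
bounded entries, `G := μ[X | 𝒢]`, and `ℋ := 𝒢 ⊔ σ(A)`.  Under the conditional-independence
condition `μ[X | ℋ] =ᵐ μ[X | 𝒢]`, for every `𝒢`-measurable square-integrable `F : Ω → ℝⁿ`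
the cross term vanishes:
`∫ ⟪A(ω) · (G(ω) − X(ω)), A(ω) · F(ω)⟫ dμ(ω) = 0`. -/
theorem ambient_cross_term_vanishes
    {Ω : Type*} {𝒢 : MeasurableSpace Ω} {ℱ : MeasurableSpace Ω} {μ : Measure Ω} [IsProbabilityMeasure μ]
    (h𝒢 : 𝒢 ≤ ℱ)
    {n : ℕ}
    (X : Ω → EuclideanSpace ℝ (Fin n)) (hX : Measurable X) (hX2 : MemLp X 2 μ)
    (A : Ω → Matrix (Fin n) (Fin n) ℝ)
    (hA : Measurable (fun ω => Matrix.of.symm (A ω)))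
    (C : ℝ) (hAC : ∀ ω i j, |A ω i j| ≤ C)
    (G : Ω → EuclideanSpace ℝ (Fin n)) (hG : G = μ[X | 𝒢])
    (hCI : μ[X | 𝒢 ⊔ MeasurableSpace.comap (fun ω => Matrix.of.symm (A ω)) inferInstance]
            =ᵐ[μ] μ[X | 𝒢])
    (F : Ω → EuclideanSpace ℝ (Fin n)) (hF : Measurable[𝒢] F) (hF2 : MemLp F 2 μ) :
    ∫ ω, ⟪(WithLp.equiv 2 (Fin n → ℝ)).symm ((A ω).mulVec (G ω - X ω)),
          (WithLp.equiv 2 (Fin n → ℝ)).symm ((A ω).mulVec (F ω))⟫ ∂μ = 0 := by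
  classical
  set ℋ := 𝒢 ⊔ MeasurableSpace.comap (fun ω => Matrix.of.symm (A ω)) inferInstance with hℋdef
  have hℋ : ℋ ≤ ℱ := sup_le h𝒢 hA.comap_le
  -- measurability of matrix entries
  have hentry : ∀ i j : Fin n, Measurable[ℋ] (fun ω => A ω i j) := by
    intro i j
    have hφ : Measurable[MeasurableSpace.comap (fun ω => Matrix.of.symm (A ω)) inferInstance]
        (fun ω => Matrix.of.symm (A ω)) := Measurable.of_comap_le le_rfl
    exact (((measurable_pi_apply j).comp (measurable_pi_apply i)).comp hφ).mono
      le_sup_right le_rfl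
  have hentryℱ : ∀ i j : Fin n, Measurable[ℱ] (fun ω => A ω i j) := fun i j =>
    (hentry i j).mono hℋ le_rfl
  -- the matrix kernel B j k := ∑ i, A i j * A i k
  set B : Fin n → Fin n → Ω → ℝ := fun j k ω => ∑ i, A ω i j * A ω i k with hB
  have hBmeasℋ : ∀ j k, Measurable[ℋ] (B j k) := fun j k =>
    Finset.measurable_sum _ fun i _ => (hentry i j).mul (hentry i k)
  have hBbound : ∀ j k ω, |B j k ω| ≤ (n : ℝ) * C ^ 2 := by
    intro j k ω
    calc |B j k ω| ≤ ∑ i, |A ω i j * A ω i k| := Finset.abs_sum_le_sum_abs _ _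
      _ ≤ ∑ _i : Fin n, C ^ 2 := by
          refine Finset.sum_le_sum fun i _ => ?_
          have hC0 : (0 : ℝ) ≤ C := (abs_nonneg _).trans (hAC ω i j)
          rw [abs_mul, sq]
          exact mul_le_mul (hAC ω i j) (hAC ω i k) (abs_nonneg _) hC0
      _ = (n : ℝ) * C ^ 2 := by simp [Finset.sum_const, Finset.card_univ, nsmul_eq_mul]
  -- coordinates of F
  have hFcoordℋ : ∀ k, Measurable[ℋ] (fun ω => F ω k) := fun k =>
    ((measurable_pi_apply k).comp ((WithLp.measurable_ofLp 2 _).comp hF)).mono le_sup_left le_rfl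
  -- ψ j k := F_k * B j k
  set ψ : Fin n → Fin n → Ω → ℝ := fun j k ω => F ω k * B j k ω with hψ
  have hψmeasℋ : ∀ j k, StronglyMeasurable[ℋ] (ψ j k) := fun j k =>
    (((hFcoordℋ k).mul (hBmeasℋ j k))).stronglyMeasurable
  have hψ2 : ∀ j k, MemLp (ψ j k) 2 μ := by
    intro j k
    have hFk2 : MemLp (fun ω => F ω k) 2 μ := aux_memℒp_two_coord hF2 k
    refine (hFk2.const_mul ((n : ℝ) * C ^ 2)).of_le
      (((hψmeasℋ j k).mono hℋ).aestronglyMeasurable)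
      (Filter.Eventually.of_forall fun ω => ?_)
    show ‖F ω k * B j k ω‖ ≤ ‖(n : ℝ) * C ^ 2 * F ω k‖
    simp only [Real.norm_eq_abs]
    rw [abs_mul, abs_mul]
    have h1 := hBbound j k ω
    have h2 : (n : ℝ) * C ^ 2 ≤ |(n : ℝ) * C ^ 2| := le_abs_self _
    nlinarith [abs_nonneg (F ω k), abs_nonneg (B j k ω)]
  -- coordinates of X and G
  have hXj2 : ∀ j, MemLp (fun ω => X ω j) 2 μ := fun j => aux_memℒp_two_coord hX2 j
  have hXint : Integrable X μ := hX2.integrable one_le_two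
  have hGj : ∀ j, (fun ω => G ω j) =ᵐ[μ] μ[fun ω => X ω j|𝒢] := by
    intro j
    have := aux_condexp_euclidean_apply h𝒢 hXint j
    rw [hG]
    exact this
  have hGjℋ : ∀ j, (fun ω => G ω j) =ᵐ[μ] μ[fun ω => X ω j|ℋ] := by
    intro j
    have c2 := aux_condexp_euclidean_apply hℋ hXint j
    have c3 : (fun ω => (μ[X|ℋ]) ω j) =ᵐ[μ] fun ω => (μ[X|𝒢]) ω j :=
      hCI.mono fun ω h => congrFun (congrArg WithLp.ofLp h) j
    exact (hGj j).trans ((aux_condexp_euclidean_apply h𝒢 hXint j).symm.trans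
      (c3.symm.trans c2))
  have hGj2 : ∀ j, MemLp (fun ω => G ω j) 2 μ := fun j =>
    (aux_memℒp_two_condexp h𝒢 (hXj2 j)).ae_eq (hGj j).symm
  -- key vanishing for each coordinate pair
  have key : ∀ j k, ∫ ω, (G ω j - X ω j) * ψ j k ω ∂μ = 0 := by
    intro j k
    have hGψ : Integrable (fun ω => G ω j * ψ j k ω) μ :=
      aux_integrable_mul_of_memℒp_two (hGj2 j) (hψ2 j k)
    have hXψ : Integrable (fun ω => X ω j * ψ j k ω) μ :=
      aux_integrable_mul_of_memℒp_two (hXj2 j) (hψ2 j k)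
    have hXjInt : Integrable (fun ω => X ω j) μ := (hXj2 j).integrable one_le_two
    have hpull : μ[(ψ j k) * (fun ω => X ω j)|ℋ]
        =ᵐ[μ] (ψ j k) * μ[fun ω => X ω j|ℋ] := by
      refine condExp_mul_of_stronglyMeasurable_left (hψmeasℋ j k) ?_ hXjInt
      exact (aux_integrable_mul_of_memℒp_two (hψ2 j k) (hXj2 j)).congr
        (Filter.Eventually.of_forall fun ω => rfl)
    have h1 : ∫ ω, G ω j * ψ j k ω ∂μ = ∫ ω, (μ[fun ω => X ω j|ℋ]) ω * ψ j k ω ∂μ :=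
      integral_congr_ae ((hGjℋ j).mono fun ω h => by
        dsimp only at h ⊢; rw [h])
    have h2 : ∫ ω, (μ[fun ω => X ω j|ℋ]) ω * ψ j k ω ∂μ = ∫ ω, X ω j * ψ j k ω ∂μ := by
      calc ∫ ω, (μ[fun ω => X ω j|ℋ]) ω * ψ j k ω ∂μ
          = ∫ ω, (μ[(ψ j k) * (fun ω => X ω j)|ℋ]) ω ∂μ := by
            refine (integral_congr_ae (hpull.mono fun ω h => ?_)).symm
            simp only [Pi.mul_apply] at h ⊢
            rw [h, mul_comm]
        _ = ∫ ω, ((ψ j k) * fun ω => X ω j) ω ∂μ := integral_condExp hℋ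
        _ = ∫ ω, X ω j * ψ j k ω ∂μ := by
            refine integral_congr_ae (Filter.Eventually.of_forall fun ω => ?_)
            simp [mul_comm]
    have hsplit : ∫ ω, (G ω j - X ω j) * ψ j k ω ∂μ
        = ∫ ω, G ω j * ψ j k ω ∂μ - ∫ ω, X ω j * ψ j k ω ∂μ := by
      rw [← integral_sub hGψ hXψ]
      exact integral_congr_ae (Filter.Eventually.of_forall fun ω => by ring)
    rw [hsplit, h1, h2, sub_self]
  -- rewrite the integrand as a double sum
  have hint : ∀ ω, ⟪(WithLp.equiv 2 (Fin n → ℝ)).symm ((A ω).mulVec (G ω - X ω)),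
          (WithLp.equiv 2 (Fin n → ℝ)).symm ((A ω).mulVec (F ω))⟫
        = ∑ j, ∑ k, (G ω j - X ω j) * ψ j k ω := by
    intro ω
    have := aux_sum_rearrange (fun i j => A ω i j) (fun j => G ω j - X ω j) (fun k => F ω k)
    simp only [PiLp.inner_apply, RCLike.inner_apply, starRingEnd_apply, star_trivial,
      WithLp.equiv_symm_apply, PiLp.toLp_apply, Matrix.mulVec, dotProduct, PiLp.sub_apply, Pi.sub_apply]
    exact (Finset.sum_congr rfl fun i _ => mul_comm _ _).trans this
  rw [integral_congr_ae (Filter.Eventually.of_forall hint)]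
  have hterm : ∀ j k, Integrable (fun ω => (G ω j - X ω j) * ψ j k ω) μ := fun j k =>
    aux_integrable_mul_of_memℒp_two ((hGj2 j).sub (hXj2 j)) (hψ2 j k)
  rw [integral_finset_sum _ fun j _ => integrable_finset_sum _ fun k _ => hterm j k]
  refine Finset.sum_eq_zero fun j _ => ?_
  rw [integral_finset_sum _ fun k _ => hterm j k]
  exact Finset.sum_eq_zero fun k _ => key j k
end

section
/- Under the stated setting, the ambient-diffusion objective admits a Pythagorean decomposition around the conditional expectation: for every function H : Ω → ℝⁿ that is 𝒢-measurable and square-integrable, ∫_Ω ‖A(ω)·H(ω) − A(ω)·X(ω)‖² dμ(ω) = ∫_Ω ‖A(ω)·G(ω) − A(ω)·X(ω)‖² dμ(ω) + ∫_Ω ‖A(ω)·(H(ω) − G(ω))‖² dμ(ω). -/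
open MeasureTheory

section Helpers

variable {Ω : Type*}

/-- The conditional expectation of an `L²` real function is in `L²`. -/
private lemma memℒp_two_condexp {m m0 : MeasurableSpace Ω} (hm : m ≤ m0) {μ : Measure Ω}
    [IsFiniteMeasure μ] {f : Ω → ℝ} (hf : MemLp f 2 μ) : MemLp (μ[f|m]) 2 μ := by
  have heq : (condExpL2 ℝ ℝ hm (hf.toLp f) : Ω → ℝ) =ᵐ[μ] μ[f|m] :=
    ae_eq_condExp_of_forall_setIntegral_eq hm (hf.integrable one_le_two)
      (fun s _ hμs => integrableOn_condExpL2_of_measure_ne_top hm hμs.ne _)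
      (fun s hs hμs => by
        rw [integral_condExpL2_eq hm (hf.toLp f) hs hμs.ne]
        exact setIntegral_congr_ae (hm s hs) (hf.coeFn_toLp.mono fun x hx _ => hx))
      (aestronglyMeasurable_condExpL2 hm _)
  exact (Lp.memLp ((condExpL2 ℝ ℝ hm (hf.toLp f) : Ω →₂[μ] ℝ))).ae_eq heq

/-- Coordinates of the (Euclidean-space-valued) conditional expectation are versions of the
conditional expectations of the coordinates. -/
private lemma condexp_euclidean_apply {m m0 : MeasurableSpace Ω} (hm : m ≤ m0) {μ : Measure Ω}
    [IsFiniteMeasure μ] {n : ℕ} {X : Ω → EuclideanSpace ℝ (Fin n)} (hX : Integrable X μ)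
    (k : Fin n) :
    (fun ω => (μ[X|m]) ω k) =ᵐ[μ] μ[fun ω => X ω k|m] := by
  have hproj : ∀ (g : Ω → EuclideanSpace ℝ (Fin n)), Integrable g μ → ∀ s : Set Ω,
      ∫ ω in s, g ω k ∂μ = EuclideanSpace.proj (𝕜 := ℝ) k (∫ ω in s, g ω ∂μ) := by
    intro g hg s
    exact ContinuousLinearMap.integral_comp_comm (EuclideanSpace.proj (𝕜 := ℝ) k)
      hg.integrableOn
  refine ae_eq_condExp_of_forall_setIntegral_eq hm
      ((EuclideanSpace.proj (𝕜 := ℝ) k).integrable_comp hX) ?_ ?_ ?_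
  · intro s _ _
    exact ((EuclideanSpace.proj (𝕜 := ℝ) k).integrable_comp
      (integrable_condExp (f := X))).integrableOn
  · intro s hs _
    rw [hproj _ (integrable_condExp (f := X)) s, hproj X hX s, setIntegral_condExp hm hX hs]
  · exact ((EuclideanSpace.proj (𝕜 := ℝ) k).continuous.comp_stronglyMeasurable
      stronglyMeasurable_condExp).aestronglyMeasurable

/-- The product of two real `L²` functions is integrable. -/
private lemma integrable_mul_of_memℒp_two {m0 : MeasurableSpace Ω} {μ : Measure Ω} {f g : Ω → ℝ}
    (hf : MemLp f 2 μ) (hg : MemLp g 2 μ) : Integrable (fun ω => f ω * g ω) μ := by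
  have h := L2.integrable_inner (𝕜 := ℝ) (hf.toLp f) (hg.toLp g)
  refine h.congr ?_
  filter_upwards [hf.coeFn_toLp, hg.coeFn_toLp] with ω h1 h2
  simp [h1, h2, RCLike.inner_apply, starRingEnd_apply, mul_comm]

/-- Multiplying an `L²` function by a uniformly bounded measurable function stays in `L²`. -/
private lemma memℒp_two_bdd_mul {m0 : MeasurableSpace Ω} {μ : Measure Ω} {a h : Ω → ℝ} {C : ℝ}
    (ha : AEStronglyMeasurable a μ) (hbd : ∀ ω, |a ω| ≤ C) (hh : MemLp h 2 μ) :
    MemLp (fun ω => a ω * h ω) 2 μ := by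
  refine MemLp.of_le (hh.const_mul C) (ha.mul hh.aestronglyMeasurable) ?_
  refine Filter.Eventually.of_forall fun ω => ?_
  simp only [Real.norm_eq_abs, abs_mul]
  exact mul_le_mul_of_nonneg_right ((hbd ω).trans (le_abs_self C)) (abs_nonneg _)

end Helpers

/-- **Pythagorean decomposition of the ambient-diffusion objective.**
Let `(Ω, ℱ, μ)` be a probability space, `𝒢 ≤ ℱ` a sub-σ-algebra, `X` a measurable
square-integrable `ℝⁿ`-valued signal, `A` a measurable matrix-valued map with uniformly
bounded entries, `G := μ[X | 𝒢]`, and `ℋ := 𝒢 ⊔ σ(A)`.  Under the conditional-independence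
condition `μ[X | ℋ] =ᵐ μ[X | 𝒢]`, for every `𝒢`-measurable square-integrable `H : Ω → ℝⁿ`:
`∫ ‖A·H − A·X‖² dμ = ∫ ‖A·G − A·X‖² dμ + ∫ ‖A·(H − G)‖² dμ`. -/
theorem ambient_pythagorean_decomposition
    {Ω : Type*} {𝒢 : MeasurableSpace Ω} {ℱ : MeasurableSpace Ω} {μ : Measure Ω} [IsProbabilityMeasure μ]
    (h𝒢 : 𝒢 ≤ ℱ)
    {n : ℕ}
    (X : Ω → EuclideanSpace ℝ (Fin n)) (hX : Measurable X) (hX2 : MemLp X 2 μ)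
    (A : Ω → Matrix (Fin n) (Fin n) ℝ)
    (hA : Measurable (fun ω => Matrix.of.symm (A ω)))
    (C : ℝ) (hAC : ∀ ω i j, |A ω i j| ≤ C)
    (G : Ω → EuclideanSpace ℝ (Fin n)) (hG : G = μ[X | 𝒢])
    (hCI : μ[X | 𝒢 ⊔ MeasurableSpace.comap (fun ω => Matrix.of.symm (A ω)) inferInstance]
            =ᵐ[μ] μ[X | 𝒢])
    (H : Ω → EuclideanSpace ℝ (Fin n)) (hH : Measurable[𝒢] H) (hH2 : MemLp H 2 μ) :
    ∫ ω, ‖(WithLp.equiv 2 (Fin n → ℝ)).symm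
            ((A ω).mulVec (H ω) - (A ω).mulVec (X ω))‖ ^ 2 ∂μ
      = ∫ ω, ‖(WithLp.equiv 2 (Fin n → ℝ)).symm
            ((A ω).mulVec (G ω) - (A ω).mulVec (X ω))‖ ^ 2 ∂μ
        + ∫ ω, ‖(WithLp.equiv 2 (Fin n → ℝ)).symm
            ((A ω).mulVec (H ω - G ω))‖ ^ 2 ∂μ := by
  classical
  set mA : MeasurableSpace Ω :=
    MeasurableSpace.comap (fun ω => Matrix.of.symm (A ω)) inferInstance with hmA
  set m : MeasurableSpace Ω := 𝒢 ⊔ mA with hmdef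
  have hm : m ≤ ℱ := sup_le h𝒢 hA.comap_le
  -- coordinates of X, H are in L²
  have hXk2 : ∀ k, MemLp (fun ω => X ω k) 2 μ := fun k =>
    (EuclideanSpace.proj (𝕜 := ℝ) k).comp_memLp' hX2
  have hHk2 : ∀ k, MemLp (fun ω => H ω k) 2 μ := fun k =>
    (EuclideanSpace.proj (𝕜 := ℝ) k).comp_memLp' hH2
  have hX1 : Integrable X μ := hX2.integrable one_le_two
  -- coordinates of G
  have hGk : ∀ k, (fun ω => G ω k) =ᵐ[μ] μ[fun ω => X ω k|𝒢] := by
    intro k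
    rw [hG]
    exact condexp_euclidean_apply h𝒢 hX1 k
  have hGk2 : ∀ k, MemLp (fun ω => G ω k) 2 μ := fun k =>
    (memℒp_two_condexp h𝒢 (hXk2 k)).ae_eq (hGk k).symm
  -- conditional expectation of coordinates of X w.r.t. m
  have hCIk : ∀ k, μ[fun ω => X ω k|m] =ᵐ[μ] fun ω => G ω k := by
    intro k
    refine (condexp_euclidean_apply hm hX1 k).symm.trans ?_
    filter_upwards [hCI] with ω hω
    rw [hω, ← hG]
  -- measurability facts
  have hAm : Measurable[mA] (fun ω => Matrix.of.symm (A ω)) := Measurable.of_comap_le le_rfl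
  have hAkm : ∀ i j, Measurable[m] (fun ω => A ω i j) := fun i j =>
    ((measurable_pi_apply j).comp ((measurable_pi_apply i).comp hAm)).mono le_sup_right le_rfl
  have hAkF : ∀ i j, Measurable[ℱ] (fun ω => A ω i j) := fun i j =>
    ((measurable_pi_apply j).comp ((measurable_pi_apply i).comp hA))
  have hHkm : ∀ k, Measurable[m] (fun ω => H ω k) := fun k =>
    ((EuclideanSpace.proj (𝕜 := ℝ) k).continuous.measurable.comp hH).mono le_sup_left le_rfl
  have hGmeas : Measurable[𝒢] G := by
    rw [hG]; exact stronglyMeasurable_condExp.measurable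
  have hGkm : ∀ k, Measurable[m] (fun ω => G ω k) := fun k =>
    ((EuclideanSpace.proj (𝕜 := ℝ) k).continuous.measurable.comp hGmeas).mono le_sup_left le_rfl
  -- scalar building blocks
  set u : Fin n → Ω → ℝ := fun i ω => ∑ j, A ω i j * (H ω j - G ω j) with hu
  set v : Fin n → Ω → ℝ := fun i ω => ∑ j, A ω i j * (G ω j - X ω j) with hv
  have hu2 : ∀ i, MemLp (u i) 2 μ := fun i =>
    memLp_finset_sum _ fun j _ => memℒp_two_bdd_mul (hAkF i j).aestronglyMeasurable
      (fun ω => hAC ω i j) ((hHk2 j).sub (hGk2 j))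
  have hv2 : ∀ i, MemLp (v i) 2 μ := fun i =>
    memLp_finset_sum _ fun j _ => memℒp_two_bdd_mul (hAkF i j).aestronglyMeasurable
      (fun ω => hAC ω i j) ((hGk2 j).sub (hXk2 j))
  have hum : ∀ i, Measurable[m] (u i) := fun i =>
    Finset.measurable_sum _ fun j _ => (hAkm i j).mul ((hHkm j).sub (hGkm j))
  -- the key orthogonality relation
  have hzero : ∀ (W : Ω → ℝ), StronglyMeasurable[m] W → MemLp W 2 μ → ∀ k,
      ∫ ω, W ω * (G ω k - X ω k) ∂μ = 0 := by
    intro W hWm hW2 k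
    have hXk1 : Integrable (fun ω => X ω k) μ := (hXk2 k).integrable one_le_two
    have hWXl : Integrable (fun ω => W ω * X ω k) μ :=
      integrable_mul_of_memℒp_two hW2 (hXk2 k)
    have hWX : Integrable (W * fun ω => X ω k) μ := hWXl
    have hWG : Integrable (fun ω => W ω * G ω k) μ :=
      integrable_mul_of_memℒp_two hW2 (hGk2 k)
    have key : ∫ ω, W ω * X ω k ∂μ = ∫ ω, W ω * G ω k ∂μ := by
      have h1 : μ[(W * fun ω => X ω k)|m] =ᵐ[μ] W * μ[(fun ω => X ω k)|m] :=
        condExp_mul_of_stronglyMeasurable_left hWm hWX hXk1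
      calc ∫ ω, W ω * X ω k ∂μ
          = ∫ ω, (μ[(W * fun ω => X ω k)|m]) ω ∂μ := (integral_condExp hm).symm
        _ = ∫ ω, (W * μ[(fun ω => X ω k)|m]) ω ∂μ := integral_congr_ae h1
        _ = ∫ ω, W ω * G ω k ∂μ := by
            refine integral_congr_ae ?_
            filter_upwards [hCIk k] with ω hω
            simp [Pi.mul_apply, hω]
    have hsub : ∫ ω, W ω * (G ω k - X ω k) ∂μ
        = ∫ ω, W ω * G ω k ∂μ - ∫ ω, W ω * X ω k ∂μ := by
      rw [← integral_sub hWG hWXl]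
      refine integral_congr_ae (Filter.Eventually.of_forall fun ω => ?_)
      simp [Pi.mul_apply]
      ring
    rw [hsub, key, sub_self]
  -- the cross term vanishes
  have hcross : ∀ i, ∫ ω, u i ω * v i ω ∂μ = 0 := by
    intro i
    have hW2 : ∀ k, MemLp (fun ω => u i ω * A ω i k) 2 μ := fun k =>
      (memℒp_two_bdd_mul (hAkF i k).aestronglyMeasurable (fun ω => hAC ω i k)
        (hu2 i)).ae_eq (Filter.Eventually.of_forall fun ω => mul_comm _ _)
    have hWm : ∀ k, StronglyMeasurable[m] (fun ω => u i ω * A ω i k) := fun k =>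
      ((hum i).mul (hAkm i k)).stronglyMeasurable
    have hterm : ∀ k, Integrable (fun ω => u i ω * A ω i k * (G ω k - X ω k)) μ := fun k =>
      integrable_mul_of_memℒp_two (hW2 k) ((hGk2 k).sub (hXk2 k))
    have hexp : ∀ ω, u i ω * v i ω = ∑ k, u i ω * A ω i k * (G ω k - X ω k) := by
      intro ω
      simp only [hv]
      rw [Finset.mul_sum]
      exact Finset.sum_congr rfl fun k _ => by ring
    calc ∫ ω, u i ω * v i ω ∂μ
        = ∫ ω, ∑ k, u i ω * A ω i k * (G ω k - X ω k) ∂μ :=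
          integral_congr_ae (Filter.Eventually.of_forall hexp)
      _ = ∑ k, ∫ ω, u i ω * A ω i k * (G ω k - X ω k) ∂μ :=
          integral_finset_sum _ fun k _ => hterm k
      _ = 0 := Finset.sum_eq_zero fun k _ => hzero _ (hWm k) (hW2 k) k
  -- norms as sums of squares of coordinates
  have hns : ∀ y : Fin n → ℝ, ‖(WithLp.equiv 2 (Fin n → ℝ)).symm y‖ ^ 2 = ∑ i, y i ^ 2 := by
    intro y
    rw [EuclideanSpace.norm_eq, Real.sq_sqrt (by positivity)]
    simp [sq_abs]
  -- pointwise identities for the three integrands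
  have hint1 : ∀ ω, ‖(WithLp.equiv 2 (Fin n → ℝ)).symm
      ((A ω).mulVec (H ω) - (A ω).mulVec (X ω))‖ ^ 2 = ∑ i, (u i ω + v i ω) ^ 2 := by
    intro ω
    rw [hns]
    refine Finset.sum_congr rfl fun i _ => ?_
    have : ((A ω).mulVec (H ω) - (A ω).mulVec (X ω)) i = u i ω + v i ω := by
      simp only [hu, hv, Pi.sub_apply, Matrix.mulVec, dotProduct,
        ← Finset.sum_sub_distrib, ← Finset.sum_add_distrib]
      exact Finset.sum_congr rfl fun j _ => by ring
    rw [this]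
  have hint2 : ∀ ω, ‖(WithLp.equiv 2 (Fin n → ℝ)).symm
      ((A ω).mulVec (G ω) - (A ω).mulVec (X ω))‖ ^ 2 = ∑ i, (v i ω) ^ 2 := by
    intro ω
    rw [hns]
    refine Finset.sum_congr rfl fun i _ => ?_
    have : ((A ω).mulVec (G ω) - (A ω).mulVec (X ω)) i = v i ω := by
      simp only [hv, Pi.sub_apply, Matrix.mulVec, dotProduct,
        ← Finset.sum_sub_distrib]
      exact Finset.sum_congr rfl fun j _ => by ring
    rw [this]
  have hint3 : ∀ ω, ‖(WithLp.equiv 2 (Fin n → ℝ)).symm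
      ((A ω).mulVec (H ω - G ω))‖ ^ 2 = ∑ i, (u i ω) ^ 2 := by
    intro ω
    rw [hns]
    refine Finset.sum_congr rfl fun i _ => ?_
    have : ((A ω).mulVec (H ω - G ω)) i = u i ω := by
      simp only [hu, Matrix.mulVec, dotProduct, PiLp.sub_apply, Pi.sub_apply]
    rw [this]
  -- integrability of the pieces
  have hsq : ∀ (f : Ω → ℝ), MemLp f 2 μ → Integrable (fun ω => f ω ^ 2) μ := fun f hf => by
    simpa [pow_two] using integrable_mul_of_memℒp_two hf hf
  have hIu : Integrable (fun ω => ∑ i, (u i ω) ^ 2) μ :=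
    integrable_finset_sum _ fun i _ => hsq _ (hu2 i)
  have hIv : Integrable (fun ω => ∑ i, (v i ω) ^ 2) μ :=
    integrable_finset_sum _ fun i _ => hsq _ (hv2 i)
  have hIuv : Integrable (fun ω => ∑ i, 2 * (u i ω * v i ω)) μ :=
    integrable_finset_sum _ fun i _ =>
      (integrable_mul_of_memℒp_two (hu2 i) (hv2 i)).const_mul 2
  -- the cross-term integral is zero
  have hcross0 : ∫ ω, ∑ i, 2 * (u i ω * v i ω) ∂μ = 0 := by
    rw [integral_finset_sum _ fun i _ =>
      (integrable_mul_of_memℒp_two (hu2 i) (hv2 i)).const_mul 2]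
    refine Finset.sum_eq_zero fun i _ => ?_
    rw [integral_const_mul, hcross i, mul_zero]
  -- assemble
  calc ∫ ω, ‖(WithLp.equiv 2 (Fin n → ℝ)).symm
          ((A ω).mulVec (H ω) - (A ω).mulVec (X ω))‖ ^ 2 ∂μ
      = ∫ ω, (∑ i, (v i ω) ^ 2) + ((∑ i, (u i ω) ^ 2) + ∑ i, 2 * (u i ω * v i ω)) ∂μ := by
        refine integral_congr_ae (Filter.Eventually.of_forall fun ω => ?_)
        beta_reduce
        rw [hint1 ω, ← Finset.sum_add_distrib, ← Finset.sum_add_distrib]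
        exact Finset.sum_congr rfl fun i _ => by ring
    _ = (∫ ω, ∑ i, (v i ω) ^ 2 ∂μ) + ((∫ ω, ∑ i, (u i ω) ^ 2 ∂μ)
          + ∫ ω, ∑ i, 2 * (u i ω * v i ω) ∂μ) := by
        have hIug : Integrable (fun ω => (∑ i, u i ω ^ 2) + ∑ i, 2 * (u i ω * v i ω)) μ :=
          hIu.add hIuv
        rw [integral_add hIv hIug, integral_add hIu hIuv]
    _ = (∫ ω, ∑ i, (v i ω) ^ 2 ∂μ) + (∫ ω, ∑ i, (u i ω) ^ 2 ∂μ) := by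
        rw [hcross0, add_zero]
    _ = _ := by
        rw [integral_congr_ae (Filter.Eventually.of_forall hint2),
          integral_congr_ae (Filter.Eventually.of_forall hint3)]
end

section
/- (Theorem 1, uniqueness of the minimizer.) Under the stated setting, assume additionally that for μ-almost every ω the matrix M(ω) = E[AᵀA | 𝒢](ω) is positive definite. Then G = μ[X | 𝒢] is the μ-a.e. unique minimizer of the ambient-diffusion objective: for every function H : Ω → ℝⁿ that is 𝒢-measurable and square-integrable, ∫_Ω ‖A·H − A·X‖² dμ ≥ ∫_Ω ‖A·G − A·X‖² dμ, with equality if and only if H = G μ-almost everywhere. -/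
open MeasureTheory Matrix


private lemma aux_mul_integrable {Ω : Type*} {ℱ : MeasurableSpace Ω} {μ : Measure Ω}
    {f g : Ω → ℝ} (hf : MemLp f 2 μ) (hg : MemLp g 2 μ) :
    Integrable (fun ω => f ω * g ω) μ := by
  have h : MemLp (f • g) 1 μ := MemLp.smul (φ := f) (f := g) hg hf
  have h' := memLp_one_iff_integrable.mp h
  exact h'.congr (Filter.Eventually.of_forall fun ω => by simp [Pi.smul_apply, smul_eq_mul])

private lemma aux_bdd_mul_memℒp {Ω : Type*} {ℱ : MeasurableSpace Ω} {μ : Measure Ω}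
    {f g : Ω → ℝ} {c : ℝ} (hg : MemLp g 2 μ)
    (hf : AEStronglyMeasurable f μ) (hbd : ∀ ω, |f ω| ≤ c) :
    MemLp (fun ω => f ω * g ω) 2 μ :=
  MemLp.of_le_mul hg (hf.mul hg.1) (Filter.Eventually.of_forall fun ω => by
    rw [norm_mul]
    exact mul_le_mul_of_nonneg_right (by simpa [Real.norm_eq_abs] using hbd ω) (norm_nonneg _))

private lemma aux_memℒp_condexp_two {Ω : Type*} {m ℱ : MeasurableSpace Ω} {μ : Measure Ω}
    [IsFiniteMeasure μ] (hm : m ≤ ℱ)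
    {E : Type*} [NormedAddCommGroup E] [InnerProductSpace ℝ E] [CompleteSpace E]
    {f : Ω → E} (hf : MemLp f 2 μ) : MemLp (μ[f|m]) 2 μ := by
  set flp := hf.toLp f with hflp
  have heq : ((condExpL2 E ℝ hm flp : lpMeas E ℝ m 2 μ) : Ω → E) =ᵐ[μ] μ[f|m] :=
    ae_eq_condExp_of_forall_setIntegral_eq hm (hf.integrable one_le_two)
      (fun s _ hμs =>
        integrableOn_Lp_of_measure_ne_top _ (by norm_num : (1:ENNReal) ≤ 2) hμs.ne)
      (fun s hs hμs => by
        rw [integral_condExpL2_eq hm flp hs hμs.ne]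
        exact setIntegral_congr_ae (hm s hs) (hf.coeFn_toLp.mono fun ω h _ => h))
      (aestronglyMeasurable_condExpL2 hm flp)
  exact (Lp.memLp _).ae_eq heq

private lemma aux_condexp_apply {Ω : Type*} {m ℱ : MeasurableSpace Ω} {μ : Measure Ω}
    [IsFiniteMeasure μ] (hm : m ≤ ℱ)
    {n : ℕ} {f : Ω → EuclideanSpace ℝ (Fin n)} (hf : Integrable f μ) (k : Fin n) :
    μ[fun ω => f ω k | m] =ᵐ[μ] fun ω => (μ[f|m]) ω k := by
  have hfk : Integrable (fun ω => f ω k) μ := by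
    have := (EuclideanSpace.proj k : EuclideanSpace ℝ (Fin n) →L[ℝ] ℝ).integrable_comp hf
    simpa [Function.comp, PiLp.proj_apply] using this
  refine (ae_eq_condExp_of_forall_setIntegral_eq hm hfk
    (fun s _ _ => ?_) (fun s hs hμs => ?_) ?_).symm
  · have : Integrable (fun ω => (μ[f|m]) ω k) μ := by
      have := (EuclideanSpace.proj k : EuclideanSpace ℝ (Fin n) →L[ℝ] ℝ).integrable_comp
        (integrable_condExp (f := f) (m := m) (μ := μ))
      simpa [Function.comp, PiLp.proj_apply] using this
    exact this.integrableOn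
  · have h1 := (EuclideanSpace.proj k : EuclideanSpace ℝ (Fin n) →L[ℝ] ℝ).integral_comp_comm
      (integrable_condExp (f := f) (m := m) (μ := μ)).integrableOn (μ := μ.restrict s)
    have h2 := (EuclideanSpace.proj k : EuclideanSpace ℝ (Fin n) →L[ℝ] ℝ).integral_comp_comm
      hf.integrableOn (μ := μ.restrict s)
    simp only [PiLp.proj_apply] at h1 h2
    rw [h1, h2, setIntegral_condExp hm hf hs]
  · have h : StronglyMeasurable[m] (fun ω => (μ[f|m]) ω k) :=
      (EuclideanSpace.proj k :
        EuclideanSpace ℝ (Fin n) →L[ℝ] ℝ).continuous.comp_stronglyMeasurable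
        (stronglyMeasurable_condExp (f := f) (m := m))
    exact h.aestronglyMeasurable

private lemma aux_norm_sq {n : ℕ} (w : Fin n → ℝ) :
    ‖(WithLp.equiv 2 (Fin n → ℝ)).symm w‖ ^ 2 = ∑ i, w i ^ 2 := by
  rw [EuclideanSpace.norm_eq]
  rw [Real.sq_sqrt (by positivity)]
  simp [WithLp.equiv_symm_apply, sq_abs]

/-- **Theorem 1 (uniqueness of the minimizer).**
Let `(Ω, ℱ, μ)` be a probability space, `𝒢 ≤ ℱ` a sub-σ-algebra, `X` a measurable
square-integrable `ℝⁿ`-valued signal, `A` a measurable matrix-valued map with uniformly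
bounded entries, `G := μ[X | 𝒢]`, and `ℋ := 𝒢 ⊔ σ(A)`.  Assume the conditional-independence
condition `μ[X | ℋ] =ᵐ μ[X | 𝒢]` and that `M = E[AᵀA | 𝒢]` is a.e. positive definite.
Then `G` is the μ-a.e. unique minimizer of the ambient objective: for every `𝒢`-measurable
square-integrable `H : Ω → ℝⁿ`, `∫ ‖A·H − A·X‖² dμ ≥ ∫ ‖A·G − A·X‖² dμ`, with equality
iff `H = G` μ-a.e. -/
theorem ambient_condexp_unique_minimizer
    {Ω : Type*} {𝒢 : MeasurableSpace Ω} {ℱ : MeasurableSpace Ω} {μ : Measure Ω} [IsProbabilityMeasure μ]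
    (h𝒢 : 𝒢 ≤ ℱ)
    {n : ℕ}
    (X : Ω → EuclideanSpace ℝ (Fin n)) (hX : Measurable X) (hX2 : MemLp X 2 μ)
    (A : Ω → Matrix (Fin n) (Fin n) ℝ)
    (hA : Measurable (fun ω => Matrix.of.symm (A ω)))
    (C : ℝ) (hAC : ∀ ω i j, |A ω i j| ≤ C)
    (G : Ω → EuclideanSpace ℝ (Fin n)) (hG : G = μ[X | 𝒢])
    (hCI : μ[X | 𝒢 ⊔ MeasurableSpace.comap (fun ω => Matrix.of.symm (A ω)) inferInstance]
            =ᵐ[μ] μ[X | 𝒢])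
    (M : Ω → Matrix (Fin n) (Fin n) ℝ)
    (hM : ∀ i j, (fun ω => M ω i j) = μ[fun ω' => ((A ω')ᵀ * A ω') i j | 𝒢])
    (hMpos : ∀ᵐ ω ∂μ, (M ω).PosDef)
    (H : Ω → EuclideanSpace ℝ (Fin n)) (hH : Measurable[𝒢] H) (hH2 : MemLp H 2 μ) :
    (∫ ω, ‖(WithLp.equiv 2 (Fin n → ℝ)).symm
            ((A ω).mulVec (H ω) - (A ω).mulVec (X ω))‖ ^ 2 ∂μ
      ≥ ∫ ω, ‖(WithLp.equiv 2 (Fin n → ℝ)).symm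
            ((A ω).mulVec (G ω) - (A ω).mulVec (X ω))‖ ^ 2 ∂μ)
    ∧ ((∫ ω, ‖(WithLp.equiv 2 (Fin n → ℝ)).symm
            ((A ω).mulVec (H ω) - (A ω).mulVec (X ω))‖ ^ 2 ∂μ
      = ∫ ω, ‖(WithLp.equiv 2 (Fin n → ℝ)).symm
            ((A ω).mulVec (G ω) - (A ω).mulVec (X ω))‖ ^ 2 ∂μ)
      ↔ H =ᵐ[μ] G) := by
  classical
  set ℋ : MeasurableSpace Ω :=
    𝒢 ⊔ MeasurableSpace.comap (fun ω => Matrix.of.symm (A ω)) inferInstance with hℋdef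
  have hℋ : ℋ ≤ ℱ := sup_le h𝒢 hA.comap_le
  have hAij𝒢 : ∀ i j, Measurable[ℋ] (fun ω => A ω i j) := fun i j =>
    ((measurable_pi_apply j).comp ((measurable_pi_apply i).comp
      (comap_measurable (fun ω => Matrix.of.symm (A ω))))).mono le_sup_right le_rfl
  have hAijF : ∀ i j, Measurable[ℱ] (fun ω => A ω i j) := fun i j =>
    (measurable_pi_apply j).comp ((measurable_pi_apply i).comp hA)
  -- componentwise membership in L²
  have hXi : ∀ k, MemLp (fun ω => X ω k) 2 μ := fun k => by
    have := (EuclideanSpace.proj k :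
      EuclideanSpace ℝ (Fin n) →L[ℝ] ℝ).comp_memLp' hX2
    simpa [Function.comp_def, PiLp.proj_apply] using this
  have hHi : ∀ k, MemLp (fun ω => H ω k) 2 μ := fun k => by
    have := (EuclideanSpace.proj k :
      EuclideanSpace ℝ (Fin n) →L[ℝ] ℝ).comp_memLp' hH2
    simpa [Function.comp_def, PiLp.proj_apply] using this
  have hG2 : MemLp G 2 μ := by rw [hG]; exact aux_memℒp_condexp_two h𝒢 hX2
  have hGi : ∀ k, MemLp (fun ω => G ω k) 2 μ := fun k => by
    have := (EuclideanSpace.proj k :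
      EuclideanSpace ℝ (Fin n) →L[ℝ] ℝ).comp_memLp' hG2
    simpa [Function.comp_def, PiLp.proj_apply] using this
  -- componentwise measurability
  have hGsm : StronglyMeasurable[𝒢] G := hG ▸ stronglyMeasurable_condExp
  have hGim : ∀ k, Measurable[𝒢] (fun ω => G ω k) := fun k =>
    ((EuclideanSpace.proj k :
      EuclideanSpace ℝ (Fin n) →L[ℝ] ℝ).continuous.comp_stronglyMeasurable hGsm).measurable
  have hHim : ∀ k, Measurable[𝒢] (fun ω => H ω k) := fun k =>
    (EuclideanSpace.proj k :
      EuclideanSpace ℝ (Fin n) →L[ℝ] ℝ).continuous.measurable.comp hH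
  -- the difference D and the two transformed vectors a, b
  set D : Ω → Fin n → ℝ := fun ω j => H ω j - G ω j with hDdef
  have hDm : ∀ j, Measurable[𝒢] (fun ω => D ω j) := fun j => (hHim j).sub (hGim j)
  have hDi2 : ∀ j, MemLp (fun ω => D ω j) 2 μ := fun j => (hHi j).sub (hGi j)
  have hGXi2 : ∀ k, MemLp (fun ω => G ω k - X ω k) 2 μ := fun k => (hGi k).sub (hXi k)
  set a : Ω → Fin n → ℝ := fun ω i => ∑ j, A ω i j * D ω j with hadef
  set b : Ω → Fin n → ℝ := fun ω i => ∑ j, A ω i j * (G ω j - X ω j) with hbdef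
  have ha2 : ∀ i, MemLp (fun ω => a ω i) 2 μ := fun i => by
    simp only [hadef]
    exact memLp_finset_sum _ fun j _ =>
      aux_bdd_mul_memℒp (hDi2 j) ((hAijF i j).aestronglyMeasurable) (fun ω => hAC ω i j)
  have hb2 : ∀ i, MemLp (fun ω => b ω i) 2 μ := fun i => by
    simp only [hbdef]
    exact memLp_finset_sum _ fun j _ =>
      aux_bdd_mul_memℒp (hGXi2 j) ((hAijF i j).aestronglyMeasurable) (fun ω => hAC ω i j)
  have ham : ∀ i, Measurable[ℋ] (fun ω => a ω i) := fun i => by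
    simp only [hadef]
    exact Finset.measurable_sum _ fun j _ => (hAij𝒢 i j).mul ((hDm j).mono le_sup_left le_rfl)
  -- the key orthogonality relation
  have key : ∀ (k : Fin n) (φ : Ω → ℝ), StronglyMeasurable[ℋ] φ → MemLp φ 2 μ →
      ∫ ω, φ ω * (G ω k - X ω k) ∂μ = 0 := by
    intro k φ hφm hφ2
    have hint1 : Integrable (fun ω => φ ω * X ω k) μ := aux_mul_integrable hφ2 (hXi k)
    have hint2 : Integrable (fun ω => φ ω * G ω k) μ := aux_mul_integrable hφ2 (hGi k)
    have hXkG : μ[(fun ω => X ω k) | ℋ] =ᵐ[μ] fun ω => G ω k := by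
      have h1 := aux_condexp_apply hℋ (hX2.integrable one_le_two) k
      filter_upwards [h1, hCI] with ω h1ω hCIω
      rw [h1ω, hCIω, hG]
    have hpull := condExp_mul_of_stronglyMeasurable_left (m := ℋ) (μ := μ) hφm
      (f := φ) (g := fun ω => X ω k) hint1 ((hXi k).integrable one_le_two)
    have hXint : ∫ ω, φ ω * X ω k ∂μ = ∫ ω, φ ω * G ω k ∂μ := by
      rw [← integral_condExp hℋ (f := fun ω => φ ω * X ω k)]
      apply integral_congr_ae
      refine hpull.trans ?_
      filter_upwards [hXkG] with ω hω
      simp only [Pi.mul_apply, hω]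
    have hsplit : ∫ ω, φ ω * (G ω k - X ω k) ∂μ
        = ∫ ω, φ ω * G ω k ∂μ - ∫ ω, φ ω * X ω k ∂μ := by
      rw [← integral_sub hint2 hint1]
      apply integral_congr_ae
      filter_upwards with ω
      ring
    rw [hsplit, hXint, sub_self]
  -- cross terms vanish
  have hab_int : ∀ i, Integrable (fun ω => a ω i * b ω i) μ := fun i =>
    aux_mul_integrable (ha2 i) (hb2 i)
  have hcross : ∀ i, ∫ ω, a ω i * b ω i ∂μ = 0 := by
    intro i
    have hsum : (fun ω => a ω i * b ω i)
        = fun ω => ∑ k, (A ω i k * a ω i) * (G ω k - X ω k) := by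
      funext ω
      show a ω i * (∑ k, A ω i k * (G ω k - X ω k)) = _
      rw [Finset.mul_sum]
      exact Finset.sum_congr rfl fun k _ => by ring
    rw [hsum, integral_finset_sum _ fun k _ => by
      exact aux_mul_integrable
        (aux_bdd_mul_memℒp (ha2 i) ((hAijF i k).aestronglyMeasurable) (fun ω => hAC ω i k))
        (hGXi2 k)]
    refine Finset.sum_eq_zero fun k _ => ?_
    exact key k (fun ω => A ω i k * a ω i)
      (((hAij𝒢 i k).mul (ham i)).stronglyMeasurable)
      (aux_bdd_mul_memℒp (ha2 i) ((hAijF i k).aestronglyMeasurable) (fun ω => hAC ω i k))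
  -- the quadratic term
  set q : Ω → ℝ := fun ω => ∑ i, (a ω i) ^ 2 with hqdef
  have hq_int : Integrable q μ := by
    simp only [hqdef]
    exact integrable_finset_sum _ fun i _ => (ha2 i).integrable_sq
  have hq_nonneg : ∀ ω, 0 ≤ q ω := fun ω => Finset.sum_nonneg fun i _ => sq_nonneg _
  -- pointwise decomposition of the objective
  have hcompH : ∀ ω i, ((A ω).mulVec (H ω) - (A ω).mulVec (X ω)) i = a ω i + b ω i := by
    intro ω i
    show (∑ j, A ω i j * H ω j) - (∑ j, A ω i j * X ω j)
      = (∑ j, A ω i j * D ω j) + ∑ j, A ω i j * (G ω j - X ω j)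
    rw [← Finset.sum_sub_distrib, ← Finset.sum_add_distrib]
    exact Finset.sum_congr rfl fun j _ => by simp only [hDdef]; ring
  have hcompG : ∀ ω i, ((A ω).mulVec (G ω) - (A ω).mulVec (X ω)) i = b ω i := by
    intro ω i
    show (∑ j, A ω i j * G ω j) - (∑ j, A ω i j * X ω j) = ∑ j, A ω i j * (G ω j - X ω j)
    rw [← Finset.sum_sub_distrib]
    exact Finset.sum_congr rfl fun j _ => by ring
  have hRHS : (fun ω => ‖(WithLp.equiv 2 (Fin n → ℝ)).symm
      ((A ω).mulVec (G ω) - (A ω).mulVec (X ω))‖ ^ 2) = fun ω => ∑ i, (b ω i) ^ 2 := by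
    funext ω
    rw [aux_norm_sq]
    exact Finset.sum_congr rfl fun i _ => by rw [hcompG ω i]
  have hLHS : (fun ω => ‖(WithLp.equiv 2 (Fin n → ℝ)).symm
      ((A ω).mulVec (H ω) - (A ω).mulVec (X ω))‖ ^ 2)
      = fun ω => q ω + ((∑ i, 2 * (a ω i * b ω i)) + ∑ i, (b ω i) ^ 2) := by
    funext ω
    rw [aux_norm_sq]
    have h1 : ∀ i, ((A ω).mulVec (H ω) - (A ω).mulVec (X ω)) i ^ 2
        = a ω i ^ 2 + (2 * (a ω i * b ω i) + b ω i ^ 2) := fun i => by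
      rw [hcompH ω i]; ring
    rw [Finset.sum_congr rfl fun i _ => h1 i, Finset.sum_add_distrib,
      Finset.sum_add_distrib]
  have hbb_int : Integrable (fun ω => ∑ i, (b ω i) ^ 2) μ :=
    integrable_finset_sum _ fun i _ => (hb2 i).integrable_sq
  have hab2_int : Integrable (fun ω => ∑ i, 2 * (a ω i * b ω i)) μ :=
    integrable_finset_sum _ fun i _ => (hab_int i).const_mul 2
  have hcross0 : ∫ ω, (∑ i, 2 * (a ω i * b ω i)) ∂μ = 0 := by
    rw [integral_finset_sum _ fun i _ => (hab_int i).const_mul 2]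
    refine Finset.sum_eq_zero fun i _ => ?_
    rw [integral_const_mul, hcross i, mul_zero]
  have hL : ∫ ω, ‖(WithLp.equiv 2 (Fin n → ℝ)).symm
        ((A ω).mulVec (H ω) - (A ω).mulVec (X ω))‖ ^ 2 ∂μ
      = (∫ ω, q ω ∂μ) + ∫ ω, ‖(WithLp.equiv 2 (Fin n → ℝ)).symm
        ((A ω).mulVec (G ω) - (A ω).mulVec (X ω))‖ ^ 2 ∂μ := by
    have e1 : ∫ ω, (q ω + ((∑ i, 2 * (a ω i * b ω i)) + ∑ i, (b ω i) ^ 2)) ∂μ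
        = (∫ ω, q ω ∂μ)
          + ∫ ω, ((∑ i, 2 * (a ω i * b ω i)) + ∑ i, (b ω i) ^ 2) ∂μ :=
      integral_add hq_int (hab2_int.add hbb_int)
    have e2 : ∫ ω, ((∑ i, 2 * (a ω i * b ω i)) + ∑ i, (b ω i) ^ 2) ∂μ
        = (∫ ω, (∑ i, 2 * (a ω i * b ω i)) ∂μ) + ∫ ω, (∑ i, (b ω i) ^ 2) ∂μ :=
      integral_add hab2_int hbb_int
    rw [hRHS, hLHS, e1, e2, hcross0, zero_add]
  have hq_integral_nonneg : 0 ≤ ∫ ω, q ω ∂μ := integral_nonneg hq_nonneg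
  constructor
  · rw [hL]; linarith
  constructor
  · -- equality implies H =ᵐ G
    intro hEq
    have hq0 : ∫ ω, q ω ∂μ = 0 := by rw [hL] at hEq; linarith
    have hcq_ae0 : μ[q|𝒢] =ᵐ[μ] 0 := by
      refine (integral_eq_zero_iff_of_nonneg_ae ?_ integrable_condExp).mp ?_
      · exact condExp_nonneg (Filter.Eventually.of_forall hq_nonneg)
      · rw [integral_condExp h𝒢]; exact hq0
    -- rewrite q as a double sum against AᵀA
    have hq_eq : q = ∑ p : Fin n × Fin n,
        fun ω => (D ω p.1 * D ω p.2) * ((A ω)ᵀ * A ω) p.1 p.2 := by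
      funext ω
      rw [Finset.sum_apply, Fintype.sum_prod_type]
      show ∑ i, (a ω i) ^ 2 = _
      calc ∑ i, (a ω i) ^ 2
          = ∑ i, ∑ j, ∑ k, (A ω i j * D ω j) * (A ω i k * D ω k) := by
            refine Finset.sum_congr rfl fun i _ => ?_
            rw [sq]
            show (∑ j, A ω i j * D ω j) * (∑ k, A ω i k * D ω k) = _
            rw [Finset.sum_mul_sum]
        _ = ∑ j, ∑ k, ∑ i, (A ω i j * D ω j) * (A ω i k * D ω k) := by
            rw [Finset.sum_comm]
            exact Finset.sum_congr rfl fun j _ => Finset.sum_comm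
        _ = ∑ j, ∑ k, (D ω j * D ω k) * ((A ω)ᵀ * A ω) j k := by
            refine Finset.sum_congr rfl fun j _ => Finset.sum_congr rfl fun k _ => ?_
            rw [Matrix.mul_apply, Finset.mul_sum]
            exact Finset.sum_congr rfl fun i _ => by
              rw [Matrix.transpose_apply]; ring
    -- bound on the entries of AᵀA
    have hWbd : ∀ ω j k, |((A ω)ᵀ * A ω) j k| ≤ (n : ℝ) * C ^ 2 := by
      intro ω j k
      rw [Matrix.mul_apply]
      calc |∑ i, (A ω)ᵀ j i * A ω i k| ≤ ∑ i, |(A ω)ᵀ j i * A ω i k| :=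
            Finset.abs_sum_le_sum_abs _ _
        _ ≤ ∑ _i : Fin n, C ^ 2 := by
            refine Finset.sum_le_sum fun i _ => ?_
            rw [Matrix.transpose_apply, abs_mul, sq]
            exact mul_le_mul (hAC ω i j) (hAC ω i k) (abs_nonneg _)
              ((abs_nonneg _).trans (hAC ω i j))
        _ = (n : ℝ) * C ^ 2 := by
            rw [Finset.sum_const, Finset.card_univ, Fintype.card_fin, nsmul_eq_mul]
    have hWm : ∀ j k, Measurable[ℱ] (fun ω => ((A ω)ᵀ * A ω) j k) := fun j k => by
      simp only [Matrix.mul_apply, Matrix.transpose_apply]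
      exact Finset.measurable_sum _ fun i _ => (hAijF i j).mul (hAijF i k)
    have hWmF : ∀ j k, Measurable[ℱ] (fun ω => ((A ω)ᵀ * A ω) j k) := fun j k =>
      hWm j k
    have hWint : ∀ j k, Integrable (fun ω => ((A ω)ᵀ * A ω) j k) μ := fun j k =>
      (integrable_const ((n : ℝ) * C ^ 2)).mono' (hWmF j k).aestronglyMeasurable
        (Filter.Eventually.of_forall fun ω => by
          rw [Real.norm_eq_abs]; exact hWbd ω j k)
    have hDD_int : ∀ (p : Fin n × Fin n), Integrable (fun ω => D ω p.1 * D ω p.2) μ :=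
      fun p => aux_mul_integrable (hDi2 p.1) (hDi2 p.2)
    have hterm_int : ∀ (p : Fin n × Fin n),
        Integrable (fun ω => (D ω p.1 * D ω p.2) * ((A ω)ᵀ * A ω) p.1 p.2) μ := by
      intro p
      refine (((hDD_int p).abs.const_mul ((n : ℝ) * C ^ 2)).mono' ?_ ?_)
      · exact ((((hDm p.1).mono h𝒢 le_rfl).mul
          ((hDm p.2).mono h𝒢 le_rfl)).aestronglyMeasurable).mul
          (hWmF p.1 p.2).aestronglyMeasurable
      · refine Filter.Eventually.of_forall fun ω => ?_
        rw [Real.norm_eq_abs, abs_mul, mul_comm ((n:ℝ) * C ^ 2) _]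
        exact mul_le_mul_of_nonneg_left (hWbd ω p.1 p.2) (abs_nonneg _)
    have hterm_condexp : ∀ (p : Fin n × Fin n),
        μ[(fun ω => (D ω p.1 * D ω p.2) * ((A ω)ᵀ * A ω) p.1 p.2)|𝒢]
          =ᵐ[μ] fun ω => (D ω p.1 * D ω p.2) * M ω p.1 p.2 := by
      intro p
      have hpull := condExp_mul_of_stronglyMeasurable_left (m := 𝒢) (μ := μ)
        (f := fun ω => D ω p.1 * D ω p.2) (g := fun ω => ((A ω)ᵀ * A ω) p.1 p.2)
        (((hDm p.1).mul (hDm p.2)).stronglyMeasurable)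
        (hterm_int p) (hWint p.1 p.2)
      refine hpull.trans ?_
      have hMp := hM p.1 p.2
      refine Filter.Eventually.of_forall fun ω => ?_
      show (D ω p.1 * D ω p.2) * (μ[fun ω' => ((A ω')ᵀ * A ω') p.1 p.2|𝒢]) ω = _
      rw [← hMp]
    have hq_condexp : μ[q|𝒢] =ᵐ[μ]
        fun ω => ∑ p : Fin n × Fin n, (D ω p.1 * D ω p.2) * M ω p.1 p.2 := by
      rw [hq_eq]
      refine (condExp_finset_sum (fun p _ => hterm_int p) 𝒢).trans ?_
      have hall : ∀ᵐ ω ∂μ, ∀ p : Fin n × Fin n,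
          (μ[(fun ω' => (D ω' p.1 * D ω' p.2) * ((A ω')ᵀ * A ω') p.1 p.2)|𝒢]) ω
            = (D ω p.1 * D ω p.2) * M ω p.1 p.2 :=
        ae_all_iff.mpr fun p => hterm_condexp p
      filter_upwards [hall] with ω hω
      rw [Finset.sum_apply]
      exact Finset.sum_congr rfl fun p _ => hω p
    have hDMD0 : ∀ᵐ ω ∂μ,
        ∑ p : Fin n × Fin n, (D ω p.1 * D ω p.2) * M ω p.1 p.2 = 0 :=
      hq_condexp.symm.trans hcq_ae0
    filter_upwards [hDMD0, hMpos] with ω h0 hpos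
    by_contra hne
    have hDne : D ω ≠ 0 := by
      intro hzero
      apply hne
      apply (WithLp.equiv 2 (Fin n → ℝ)).injective
      funext j
      have h' := congrFun hzero j
      simp only [hDdef, Pi.zero_apply] at h'
      show H ω j = G ω j
      linarith
    have hquad := hpos.dotProduct_mulVec_pos hDne
    have hform : dotProduct (star (D ω)) ((M ω) *ᵥ (D ω))
        = ∑ p : Fin n × Fin n, (D ω p.1 * D ω p.2) * M ω p.1 p.2 := by
      rw [Fintype.sum_prod_type]
      simp only [dotProduct, Matrix.mulVec, star_trivial]
      refine Finset.sum_congr rfl fun j _ => ?_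
      show D ω j * (∑ k, M ω j k * D ω k) = _
      rw [Finset.mul_sum]
      exact Finset.sum_congr rfl fun k _ => by ring
    rw [hform, h0] at hquad
    exact lt_irrefl _ hquad
  · -- H =ᵐ G implies equality
    intro hHG
    apply integral_congr_ae
    filter_upwards [hHG] with ω hω
    rw [hω]
end

section
/- Let n, m, K : ℕ, let F belong to the unitary group of n×n complex matrices, let S : Fin m → Matrix (Fin n) (Fin n) ℂ be diagonal matrices with ∑ i, (S i)ᴴ * S i = 1, and let P : Fin K → Matrix (Fin n) (Fin n) ℂ be diagonal matrices whose diagonal entries all lie in {0, 1}. Let w : Fin K → ℝ satisfy w k ≥ 0 for all k and ∑ k, w k = 1, and assume the coverage condition: for every index j there exists k with w k > 0 and (P k) j j = 1. Then the weighted average ∑ k, (w k : ℂ) • (∑ i, (S i)ᴴ * Fᴴ * (P k) * F * (S i)) is positive definite (hence full rank). -/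
open Matrix
open scoped BigOperators ComplexOrder

/-!
Writing `Q = ∑ k, w k • P k` and `A i = F * S i`, the operator is `∑ i, (A i)ᴴ * Q * A i`.
The mask average `Q` is diagonal with entry `∑ k, w k * P k j j ≥ w k > 0` at `j`, for a `k`
covering `j`, so it is positive definite. Since `F` is unitary, `∑ i, (A i)ᴴ * A i = 1`, so no
nonzero `x` is killed by every `A i`, and the quadratic form `∑ i, (A i x)ᴴ Q (A i x)` is positive.
-/

namespace Matrix

variable {ι n R : Type*} [Fintype ι]

theorem posDef_sum_smul_of_isDiag [CommRing R] [PartialOrder R] [StarRing R] [StarOrderedRing R]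
    [IsStrictOrderedRing R] [NoZeroDivisors R] [DecidableEq n] (c : ι → R) (D : ι → Matrix n n R)
    (hD : ∀ k, (D k).IsDiag) (hc : ∀ k, 0 ≤ c k) (hD_nonneg : ∀ k j, 0 ≤ D k j j)
    (hcover : ∀ j, ∃ k, 0 < c k ∧ 0 < D k j j) :
    (∑ k, c k • D k).PosDef := by
  have hdiag : ∑ k, c k • D k = diagonal fun j => ∑ k, c k * D k j j := by
    ext i j
    by_cases hij : i = j
    · simp [hij, Matrix.sum_apply]
    · simp [hij, Matrix.sum_apply, hD _ hij]
  rw [hdiag]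
  refine PosDef.diagonal fun j => ?_
  obtain ⟨k₀, hck₀, hDk₀⟩ := hcover j
  exact Finset.sum_pos' (fun k _ => mul_nonneg (hc k) (hD_nonneg k j))
    ⟨k₀, Finset.mem_univ _, mul_pos hck₀ hDk₀⟩

variable [Fintype n]

theorem exists_mulVec_ne_zero_of_sum_conjTranspose_mul_self_eq_one [CommRing R] [StarRing R]
    [DecidableEq n] {A : ι → Matrix n n R} (hA : ∑ i, (A i)ᴴ * A i = 1) {x : n → R}
    (hx : x ≠ 0) : ∃ i, A i *ᵥ x ≠ 0 := by
  by_contra! h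
  apply hx
  calc x = (∑ i, (A i)ᴴ * A i) *ᵥ x := by rw [hA, one_mulVec]
    _ = 0 := by simp [sum_mulVec, ← mulVec_mulVec, h]

theorem posDef_sum_conjTranspose_mul_mul_self [CommRing R] [PartialOrder R] [StarRing R]
    [IsOrderedAddMonoid R] {Q : Matrix n n R} (hQ : Q.PosDef) (A : ι → Matrix n n R)
    (hA : ∀ x : n → R, x ≠ 0 → ∃ i, A i *ᵥ x ≠ 0) :
    (∑ i, (A i)ᴴ * Q * A i).PosDef := by
  refine PosDef.of_dotProduct_mulVec_pos
    (posSemidef_sum _ fun i _ => hQ.posSemidef.conjTranspose_mul_mul_same (A i)).isHermitian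
    fun x hx => ?_
  obtain ⟨i₀, hi₀⟩ := hA x hx
  have hform : ∀ i, star x ⬝ᵥ (((A i)ᴴ * Q * A i) *ᵥ x)
      = star (A i *ᵥ x) ⬝ᵥ (Q *ᵥ (A i *ᵥ x)) := fun i => by
    simp only [star_mulVec, dotProduct_mulVec, vecMul_vecMul]
  rw [sum_mulVec, dotProduct_sum]
  refine Finset.sum_pos' (fun i _ => ?_) ⟨i₀, Finset.mem_univ _, ?_⟩
  · rw [hform]
    exact hQ.posSemidef.dotProduct_mulVec_nonneg _
  · rw [hform]
    exact hQ.dotProduct_mulVec_pos hi₀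

end Matrix

theorem mri_expected_forward_operator_posDef_general
    {n m K : ℕ} (F : Matrix.unitaryGroup (Fin n) ℂ)
    (S : Fin m → Matrix (Fin n) (Fin n) ℂ)
    (hSsum : ∑ i, (S i)ᴴ * S i = 1)
    (P : Fin K → Matrix (Fin n) (Fin n) ℂ)
    (hPdiag : ∀ k, (P k).IsDiag)
    (hP01 : ∀ k j, (P k) j j = 0 ∨ (P k) j j = 1)
    (w : Fin K → ℝ) (hw : ∀ k, w k ≥ 0)
    (hcover : ∀ j, ∃ k, w k > 0 ∧ (P k) j j = 1) :
    (∑ k, (w k : ℂ) •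
        (∑ i, (S i)ᴴ * (F : Matrix (Fin n) (Fin n) ℂ)ᴴ * P k
            * (F : Matrix (Fin n) (Fin n) ℂ) * S i)).PosDef := by
  set U : Matrix (Fin n) (Fin n) ℂ := (F : Matrix (Fin n) (Fin n) ℂ)
  have hQ : (∑ k, (w k : ℂ) • P k).PosDef := by
    refine posDef_sum_smul_of_isDiag _ P hPdiag (fun k => by exact_mod_cast hw k)
      (fun k j => by rcases hP01 k j with h | h <;> simp [h]) fun j => ?_
    obtain ⟨k, hwk, hPk⟩ := hcover j
    exact ⟨k, by exact_mod_cast hwk, by simp [hPk]⟩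
  have hUU : Uᴴ * U = 1 := UnitaryGroup.star_mul_self F
  have hUS : ∑ i, (U * S i)ᴴ * (U * S i) = 1 := by
    rw [← hSsum]
    refine Finset.sum_congr rfl fun i _ => ?_
    rw [conjTranspose_mul, Matrix.mul_assoc, ← Matrix.mul_assoc Uᴴ, hUU, Matrix.one_mul]
  have hrearrange : ∑ k, (w k : ℂ) • ∑ i, (S i)ᴴ * Uᴴ * P k * U * S i
      = ∑ i, (U * S i)ᴴ * (∑ k, (w k : ℂ) • P k) * (U * S i) := by
    simp only [conjTranspose_mul, Finset.smul_sum, Finset.mul_sum, Finset.sum_mul,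
      Matrix.mul_smul, Matrix.smul_mul, Matrix.mul_assoc]
    exact Finset.sum_comm
  rw [hrearrange]
  exact posDef_sum_conjTranspose_mul_mul_self hQ _ fun x hx =>
    exists_mulVec_ne_zero_of_sum_conjTranspose_mul_self_eq_one hUS hx

/-- **The conditional mean of the MRI forward operator is full rank.**
Let `F` be unitary, `S i` diagonal matrices with `∑ i, (S i)ᴴ * S i = 1`, and
`P k` diagonal matrices with diagonal entries in `{0, 1}`.  If `w k ≥ 0`, `∑ k, w k = 1`,
and every index `j` is covered (`∃ k, w k > 0 ∧ (P k) j j = 1`), then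
`∑ k, w k • (∑ i, (S i)ᴴ * Fᴴ * (P k) * F * (S i))` is positive definite. -/
theorem mri_expected_forward_operator_posDef
    {n m K : ℕ} (F : Matrix.unitaryGroup (Fin n) ℂ)
    (S : Fin m → Matrix (Fin n) (Fin n) ℂ)
    (hSdiag : ∀ i, (S i).IsDiag)
    (hSsum : ∑ i, (S i)ᴴ * S i = 1)
    (P : Fin K → Matrix (Fin n) (Fin n) ℂ)
    (hPdiag : ∀ k, (P k).IsDiag)
    (hP01 : ∀ k j, (P k) j j = 0 ∨ (P k) j j = 1)
    (w : Fin K → ℝ) (hw : ∀ k, w k ≥ 0) (hwsum : ∑ k, w k = 1)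
    (hcover : ∀ j, ∃ k, w k > 0 ∧ (P k) j j = 1) :
    (∑ k, (w k : ℂ) •
        (∑ i, (S i)ᴴ * (F : Matrix (Fin n) (Fin n) ℂ)ᴴ * P k
            * (F : Matrix (Fin n) (Fin n) ℂ) * S i)).PosDef :=
  mri_expected_forward_operator_posDef_general F S hSsum P hPdiag hP01 w hw hcover
end

section
/- (Full-rank condition of Theorem 1 for the multi-coil MRI operator.) Let n, m, K : ℕ, let F belong to the unitary group of n×n complex matrices, let S : Fin m → Matrix (Fin n) (Fin n) ℂ be diagonal matrices with ∑ i, (S i)ᴴ * S i = 1, and let P : Fin K → Matrix (Fin n) (Fin n) ℂ be diagonal matrices whose diagonal entries all lie in {0, 1}. For each k, set A k := ∑ i, (S i)ᴴ * Fᴴ * (P k) * F * (S i). Let w : Fin K → ℝ satisfy w k ≥ 0 and ∑ k, w k = 1, and assume that for every index j there exists k with w k > 0 and (P k) j j = 1. Then ∑ k, (w k : ℂ) • ((A k)ᴴ * (A k)) is positive definite, i.e. the conditional second moment E[A_trainᴴ A_train | P̃] of the MRI forward operator is full rank. -/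
/-!
Since `P k` is an orthogonal projection, `A k = ∑ i, (P k F Sᵢ)ᴴ (P k F Sᵢ)` is a Gram sum, and
the weighted second moment is positive semidefinite. The kernel of a sum of positive semidefinite
matrices is the intersection of their kernels, so a vector `x` in the kernel of the second moment
satisfies `P k F Sᵢ x = 0` whenever `w k > 0`. The masks of positive weight cover every frequency,
so `F Sᵢ x = 0`, hence `Sᵢ x = 0` for every coil, and `x = ∑ i, Sᵢᴴ Sᵢ x = 0`.
-/

open Matrix
open scoped BigOperators ComplexOrder

namespace Matrix

section

variable {ι m n 𝕜 : Type*} [Fintype ι] [Fintype m] [Fintype n] [RCLike 𝕜]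

theorem PosSemidef.sum_mulVec_eq_zero_iff {B : ι → Matrix n n 𝕜} (hB : ∀ k, (B k).PosSemidef)
    (x : n → 𝕜) : (∑ k, B k) *ᵥ x = 0 ↔ ∀ k, B k *ᵥ x = 0 := by
  refine ⟨fun h k => ?_, fun h => by simp [sum_mulVec, h]⟩
  have hsum : ∑ k, star x ⬝ᵥ (B k *ᵥ x) = 0 := by
    rw [← dotProduct_sum, ← sum_mulVec, h, dotProduct_zero]
  have hk := (Finset.sum_eq_zero_iff_of_nonneg fun k _ => (hB k).dotProduct_mulVec_nonneg x).mp
    hsum k (Finset.mem_univ k)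
  exact ((hB k).dotProduct_mulVec_zero_iff x).mp hk

theorem sum_conjTranspose_mul_self_mulVec_eq_zero_iff (B : ι → Matrix m n 𝕜) (x : n → 𝕜) :
    (∑ i, (B i)ᴴ * B i) *ᵥ x = 0 ↔ ∀ i, B i *ᵥ x = 0 := by
  simp only [PosSemidef.sum_mulVec_eq_zero_iff (fun i => posSemidef_conjTranspose_mul_self (B i)),
    conjTranspose_mul_self_mulVec_eq_zero]

theorem PosSemidef.posDef_of_mulVec_eq_zero [DecidableEq n] {M : Matrix n n 𝕜}
    (hM : M.PosSemidef) (hker : ∀ x, M *ᵥ x = 0 → x = 0) : M.PosDef :=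
  hM.posDef_iff_isUnit.mpr <| mulVec_injective_iff_isUnit.mp <|
    (injective_iff_map_eq_zero M.mulVecLin).mpr hker

theorem posSemidef_ofReal_smul_conjTranspose_mul_self (A : Matrix m n 𝕜) {r : ℝ} (hr : 0 ≤ r) :
    ((r : 𝕜) • (Aᴴ * A)).PosSemidef :=
  (posSemidef_conjTranspose_mul_self A).smul (RCLike.ofReal_nonneg.mpr hr)

theorem posSemidef_sum_smul_conjTranspose_mul_self (A : ι → Matrix m n 𝕜) {w : ι → ℝ}
    (hw : ∀ k, 0 ≤ w k) : (∑ k, (w k : 𝕜) • ((A k)ᴴ * A k)).PosSemidef :=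
  posSemidef_sum _ fun k _ => posSemidef_ofReal_smul_conjTranspose_mul_self (A k) (hw k)

theorem sum_smul_conjTranspose_mul_self_mulVec_eq_zero_iff (A : ι → Matrix m n 𝕜) {w : ι → ℝ}
    (hw : ∀ k, 0 ≤ w k) (x : n → 𝕜) :
    (∑ k, (w k : 𝕜) • ((A k)ᴴ * A k)) *ᵥ x = 0 ↔ ∀ k, 0 < w k → A k *ᵥ x = 0 := by
  rw [PosSemidef.sum_mulVec_eq_zero_iff fun k =>
    posSemidef_ofReal_smul_conjTranspose_mul_self (A k) (hw k)]
  refine forall_congr' fun k => ?_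
  rw [smul_mulVec, smul_eq_zero, conjTranspose_mul_self_mulVec_eq_zero, RCLike.ofReal_eq_zero,
    (hw k).lt_iff_ne', ← or_iff_not_imp_left]

end

section Diagonal

variable {ι n R : Type*} [Fintype n] [Semiring R]

theorem conjTranspose_mul_self_eq_self_of_isDiag [StarRing R] {P : Matrix n n R} (hP : P.IsDiag)
    (h01 : ∀ j, P j j = 0 ∨ P j j = 1) : Pᴴ * P = P := by
  classical
  rw [← hP.diagonal_diag, diagonal_conjTranspose, diagonal_mul_diagonal]
  congr 1
  funext j
  rcases h01 j with h | h <;> simp [h]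

theorem eq_zero_of_exists_isDiag_mulVec_eq_zero [NoZeroDivisors R] {P : ι → Matrix n n R}
    (hP : ∀ k, (P k).IsDiag) {y : n → R} (hcover : ∀ j, ∃ k, P k j j ≠ 0 ∧ P k *ᵥ y = 0) :
    y = 0 := by
  classical
  funext j
  obtain ⟨k, hkj, hky⟩ := hcover j
  have hj := congrFun hky j
  rw [← (hP k).diagonal_diag, mulVec_diagonal] at hj
  exact (mul_eq_zero.mp hj).resolve_left hkj

end Diagonal

end Matrix

theorem mri_second_moment_posDef_general
    {n m K : ℕ} (F : Matrix.unitaryGroup (Fin n) ℂ)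
    (S : Fin m → Matrix (Fin n) (Fin n) ℂ)
    (hSsum : ∑ i, (S i)ᴴ * S i = 1)
    (P : Fin K → Matrix (Fin n) (Fin n) ℂ)
    (hPdiag : ∀ k, (P k).IsDiag)
    (hP01 : ∀ k j, (P k) j j = 0 ∨ (P k) j j = 1)
    (A : Fin K → Matrix (Fin n) (Fin n) ℂ)
    (hAdef : ∀ k, A k = ∑ i, (S i)ᴴ * (F : Matrix (Fin n) (Fin n) ℂ)ᴴ * P k
        * (F : Matrix (Fin n) (Fin n) ℂ) * S i)
    (w : Fin K → ℝ) (hw : ∀ k, w k ≥ 0)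
    (hcover : ∀ j, ∃ k, w k > 0 ∧ (P k) j j = 1) :
    (∑ k, (w k : ℂ) • ((A k)ᴴ * A k)).PosDef := by
  set U : Matrix (Fin n) (Fin n) ℂ := ↑F
  have hU : ∀ y, U *ᵥ y = 0 → y = 0 := fun y hy =>
    mulVec_injective_of_isUnit Unitary.isUnit_coe (hy.trans (mulVec_zero _).symm)
  have hAgram : ∀ k, A k = ∑ i, (P k * U * S i)ᴴ * (P k * U * S i) := fun k => by
    rw [hAdef]
    refine Finset.sum_congr rfl fun i _ => ?_
    simp only [conjTranspose_mul, Matrix.mul_assoc]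
    rw [← Matrix.mul_assoc (P k)ᴴ, conjTranspose_mul_self_eq_self_of_isDiag (hPdiag k) (hP01 k)]
  refine (posSemidef_sum_smul_conjTranspose_mul_self A hw).posDef_of_mulVec_eq_zero fun x hx => ?_
  have hPFS : ∀ k, 0 < w k → ∀ i, (P k * U * S i) *ᵥ x = 0 := fun k hk => by
    rw [← sum_conjTranspose_mul_self_mulVec_eq_zero_iff, ← hAgram k]
    exact (sum_smul_conjTranspose_mul_self_mulVec_eq_zero_iff A hw x).mp hx k hk
  have hS : ∀ i, S i *ᵥ x = 0 := fun i =>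
    hU _ <| eq_zero_of_exists_isDiag_mulVec_eq_zero hPdiag fun j => by
      obtain ⟨k, hk, hkj⟩ := hcover j
      exact ⟨k, by simp [hkj], by simpa only [mulVec_mulVec, Matrix.mul_assoc] using hPFS k hk i⟩
  simpa only [hSsum, one_mulVec] using (sum_conjTranspose_mul_self_mulVec_eq_zero_iff S x).mpr hS

/-- **Full-rank condition of Theorem 1 for the multi-coil MRI operator.**
Let `F` be unitary, `S i` diagonal matrices with `∑ i, (S i)ᴴ * S i = 1`, and `P k`
diagonal matrices with diagonal entries in `{0, 1}`; let
`A k := ∑ i, (S i)ᴴ * Fᴴ * (P k) * F * (S i)`.  If `w k ≥ 0`, `∑ k, w k = 1`, and every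
index `j` is covered (`∃ k, w k > 0 ∧ (P k) j j = 1`), then the conditional second moment
`∑ k, w k • ((A k)ᴴ * (A k))` is positive definite, i.e. `E[A_trainᴴ A_train | P̃]` is
full rank. -/
theorem mri_second_moment_posDef
    {n m K : ℕ} (F : Matrix.unitaryGroup (Fin n) ℂ)
    (S : Fin m → Matrix (Fin n) (Fin n) ℂ)
    (hSdiag : ∀ i, (S i).IsDiag)
    (hSsum : ∑ i, (S i)ᴴ * S i = 1)
    (P : Fin K → Matrix (Fin n) (Fin n) ℂ)
    (hPdiag : ∀ k, (P k).IsDiag)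
    (hP01 : ∀ k j, (P k) j j = 0 ∨ (P k) j j = 1)
    (A : Fin K → Matrix (Fin n) (Fin n) ℂ)
    (hAdef : ∀ k, A k = ∑ i, (S i)ᴴ * (F : Matrix (Fin n) (Fin n) ℂ)ᴴ * P k
        * (F : Matrix (Fin n) (Fin n) ℂ) * S i)
    (w : Fin K → ℝ) (hw : ∀ k, w k ≥ 0) (hwsum : ∑ k, w k = 1)
    (hcover : ∀ j, ∃ k, w k > 0 ∧ (P k) j j = 1) :
    (∑ k, (w k : ℂ) • ((A k)ᴴ * A k)).PosDef :=
  mri_second_moment_posDef_general F S hSsum P hPdiag hP01 A hAdef w hw hcover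
end
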